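/- arXiv:1910.03996 — 3 statements merged into one kernel-verified Lean document; each statement's English description precedes it below -/
import Mathlib

section
/- For every configuration η ∈ Ω_n and every site x ∈ T_n, the function F_x : Ω_n → ℝ defined by F_x(η) = V_b(η_x) satisfies the continuity equation (𝓛 F_x)(η) = j̄ᵉ_{x-1,x}(η) − j̄ᵉ_{x,x+1}(η), where the microscopic energy current is j̄ᵉ_{x,x+1}(η) = −α_n b² e^{−b(η_x + η_{x+1})} + α_n b² (e^{−b η_x} + e^{−b η_{x+1}}) − γ (V_b(η_{x+1}) − V_b(η_x)). -/
open Real MeasureTheory Finset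

noncomputable section

/-- The exponential potential `V_b(u) = e^{-bu} - 1 + bu`. -/
def Vb (b u : ℝ) : ℝ := Real.exp (-(b * u)) - 1 + b * u

/-- Its derivative `V_b'(u) = b (1 - e^{-bu})`. -/
def Vb' (b u : ℝ) : ℝ := b * (1 - Real.exp (-(b * u)))

/-- The configuration obtained from `η` by exchanging the coordinates `η x` and `η (x+1)`. -/
def swapConf (n : ℕ) (η : ZMod n → ℝ) (x : ZMod n) : ZMod n → ℝ :=
  fun z => if z = x then η (x + 1) else if z = x + 1 then η x else η z

/-- The exchange (noise) operator `𝓢`. -/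
def opS (n : ℕ) [NeZero n] (f : (ZMod n → ℝ) → ℝ) (η : ZMod n → ℝ) : ℝ :=
  ∑ x : ZMod n, (f (swapConf n η x) - f η)

/-- The partial derivative `∂_{η_x} f (η)`. -/
def pder (n : ℕ) (f : (ZMod n → ℝ) → ℝ) (η : ZMod n → ℝ) (x : ZMod n) : ℝ :=
  deriv (fun t => f (Function.update η x t)) (η x)

/-- The Liouville (Hamiltonian) operator `𝓐`. -/
def opA (n : ℕ) [NeZero n] (b : ℝ) (f : (ZMod n → ℝ) → ℝ) (η : ZMod n → ℝ) : ℝ :=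
  ∑ x : ZMod n, (Vb' b (η (x + 1)) - Vb' b (η (x - 1))) * pder n f η x

/-- The full generator `𝓛 = α_n 𝓐 + γ 𝓢`. -/
def gen (n : ℕ) [NeZero n] (b αn γ : ℝ) (f : (ZMod n → ℝ) → ℝ) (η : ZMod n → ℝ) : ℝ :=
  αn * opA n b f η + γ * opS n f η

/-- The microscopic energy current `j̄ᵉ_{x,x+1}`. -/
def je (n : ℕ) (b αn γ : ℝ) (η : ZMod n → ℝ) (x : ZMod n) : ℝ :=
  -αn * b ^ 2 * Real.exp (-(b * (η x + η (x + 1))))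
    + αn * b ^ 2 * (Real.exp (-(b * η x)) + Real.exp (-(b * η (x + 1))))
    - γ * (Vb b (η (x + 1)) - Vb b (η x))

/-! The energy current is read off coordinatewise: `F_x` depends on `η_x` only, so `∂_{η_y} F_x`
vanishes for `y ≠ x` and the only exchanges that change `F_x` are those of the bonds `{x-1, x}` and
`{x, x+1}`. What remains is the identity `b² (e_{x-1} - e_{x+1}) (1 - e_x)` for the Hamiltonian part,
with `e_y = e^{-b η_y}`, which is the telescoped difference of the two currents. -/

theorem hasDerivAt_Vb (b t : ℝ) : HasDerivAt (Vb b) (Vb' b t) t := by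
  have hlin : HasDerivAt (fun u => b * u) b t := by
    simpa using (hasDerivAt_id t).const_mul b
  exact ((hlin.neg.exp.sub_const 1).add hlin).congr_deriv
    (by simp only [Vb', Pi.neg_apply]; ring)

section CoordinateFunctions

variable {n : ℕ} (g : ℝ → ℝ) (η : ZMod n → ℝ) (x : ZMod n)

theorem swapConf_apply (y z : ZMod n) : swapConf n η y z = η (Equiv.swap y (y + 1) z) := by
  rw [swapConf, Equiv.swap_apply_def]
  split_ifs <;> rfl

theorem pder_comp_eval (y : ZMod n) :
    pder n (fun η => g (η x)) η y = if y = x then deriv g (η x) else 0 := by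
  rw [pder]
  split_ifs with hyx
  · subst hyx
    simp only [Function.update_self]
  · simp only [Function.update_of_ne (Ne.symm hyx), deriv_const]

theorem opA_comp_eval [NeZero n] (b : ℝ) :
    opA n b (fun η => g (η x)) η
      = (Vb' b (η (x + 1)) - Vb' b (η (x - 1))) * deriv g (η x) := by
  simp only [opA, pder_comp_eval, mul_ite, mul_zero, Finset.sum_ite_eq', Finset.mem_univ, if_true]

theorem opS_comp_eval [NeZero n] :
    opS n (fun η => g (η x)) η
      = (g (η (x + 1)) - g (η x)) + (g (η (x - 1)) - g (η x)) := by
  have hterm : ∀ y, g (swapConf n η y x) - g (η x)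
      = (if y = x then g (η (x + 1)) - g (η x) else 0)
        + (if y = x - 1 then g (η (x - 1)) - g (η x) else 0) := by
    intro y
    rw [swapConf_apply, Equiv.swap_apply_def]
    by_cases hyx : y = x
    · subst hyx
      by_cases hy : y = y - 1
      -- a one-site ring, where both bond terms vanish
      · simp [← hy]
      · simp [hy]
    · by_cases hy : y = x - 1
      · subst hy
        simp [hyx, Ne.symm hyx]
      · have hxy : x ≠ y + 1 := fun h => hy (eq_sub_of_add_eq h.symm)
        simp [hyx, hy, Ne.symm hyx, hxy]
  simp only [opS, hterm, Finset.sum_add_distrib, Finset.sum_ite_eq', Finset.mem_univ, if_true]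

end CoordinateFunctions

theorem energy_continuity_equation_general
    (n : ℕ) [NeZero n] (b αn γ : ℝ)
    (η : ZMod n → ℝ) (x : ZMod n) :
    gen n b αn γ (fun η => Vb b (η x)) η
      = je n b αn γ η (x - 1) - je n b αn γ η x := by
  rw [gen, opA_comp_eval, opS_comp_eval, (hasDerivAt_Vb b _).deriv]
  simp only [je, Vb, Vb', sub_add_cancel, mul_add, neg_add, Real.exp_add]
  ring

/-- the energy continuity equation
`(𝓛 F_x)(η) = j̄ᵉ_{x-1,x}(η) − j̄ᵉ_{x,x+1}(η)` with `F_x(η) = V_b(η_x)`. -/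
theorem energy_continuity_equation
    (n : ℕ) [NeZero n] (hn : 3 ≤ n) (b αn γ : ℝ) (hb : 0 < b) (hγ : 0 < γ)
    (η : ZMod n → ℝ) (x : ZMod n) :
    gen n b αn γ (fun η => Vb b (η x)) η
      = je n b αn γ η (x - 1) - je n b αn γ η x :=
  energy_continuity_equation_general n b αn γ η x

end
end

section
/- Under the equilibrium product measure, the mean energy current is ∫_{Ω_n} j̄ᵉ_{x,x+1} dμ_{β̄,λ̄} = −α_n b² (e − b v)² + α_n b² for every x ∈ T_n, where e = ∫_{Ω_n} V_b(η_x) dμ_{β̄,λ̄} and v = ∫_{Ω_n} η_x dμ_{β̄,λ̄}; in particular all the integrals appearing in this identity are finite. -/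
open Real MeasureTheory Finset

noncomputable section

/-- Unnormalized single-site Gibbs density `u ↦ exp(−β̄ e^{−bu} − λ̄ u)`. -/
def gibbsDensity (b βv lv : ℝ) (u : ℝ) : ℝ :=
  Real.exp (-(βv * Real.exp (-(b * u))) - lv * u)

/-- The single-site partition function `Z̄(β̄,λ̄)`. -/
def Zbar (b βv lv : ℝ) : ℝ := ∫ u : ℝ, gibbsDensity b βv lv u

/-- The single-site Gibbs probability measure `Z̄⁻¹ exp(−β̄ e^{−bu} − λ̄ u) du`. -/
def gibbsMeasure (b βv lv : ℝ) : Measure ℝ :=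
  volume.withDensity fun u => ENNReal.ofReal ((Zbar b βv lv)⁻¹ * gibbsDensity b βv lv u)

/-- The equilibrium product measure `μ_{β̄,λ̄}` on `Ω_n = ℝ^{T_n}`. -/
def muEq (n : ℕ) [NeZero n] (b βv lv : ℝ) : Measure (ZMod n → ℝ) :=
  Measure.pi fun _ : ZMod n => gibbsMeasure b βv lv

/-! The single-site Gibbs measure is Lebesgue measure tilted by the potential
`φ(u) = -β̄ e^{-bu} - λ̄ u`. Since `φ(u) ≤ -λ̄ u` everywhere and `φ(u) ≤ C + b u` for `u ≤ 0`,
`e^{cu}` is integrable against it for every `c < λ̄`, which yields all the moments needed.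
Under the product measure the distinct coordinates `η_x` and `η_{x+1}` are independent with
this law, so, writing `E = ∫ e^{-bu}`, the mean current is
`-α_n b² E² + 2 α_n b² E` (the `γ`-term has mean zero), while `e - b v = E - 1`. -/

open ProbabilityTheory

def gibbsPotential (b β l u : ℝ) : ℝ := -(β * Real.exp (-(b * u))) - l * u

lemma gibbsMeasure_eq_tilted (b β l : ℝ) :
    gibbsMeasure b β l = volume.tilted (gibbsPotential b β l) := by
  simp only [gibbsMeasure, Measure.tilted, Zbar, gibbsDensity, gibbsPotential, div_eq_inv_mul]

lemma gibbsPotential_le_of_nonpos {b β l u : ℝ} (hb : 0 < b) (hβ : 0 < β) (hu : u ≤ 0) :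
    gibbsPotential b β l u ≤ (l / b + 1) ^ 2 / (2 * β) + b * u := by
  set s := -(b * u)
  have hs0 : 0 ≤ s := by nlinarith
  have hexp : s ^ 2 / 2 ≤ Real.exp s := by nlinarith [Real.quadratic_le_exp_of_nonneg hs0]
  have hsq : (β * s - (l / b + 1)) ^ 2 / (2 * β)
      = β * (s ^ 2 / 2) - (l / b + 1) * s + (l / b + 1) ^ 2 / (2 * β) := by
    field_simp; ring
  have hlu : l * u = -(l / b) * s := by field_simp; ring
  have hsq_nonneg : 0 ≤ (β * s - (l / b + 1)) ^ 2 / (2 * β) := by positivity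
  rw [gibbsPotential, hlu]
  nlinarith [mul_le_mul_of_nonneg_left hexp hβ.le]

lemma integrable_exp_gibbsPotential {b β l : ℝ} (hb : 0 < b) (hβ : 0 < β) (hl : 0 < l) :
    Integrable fun u => Real.exp (gibbsPotential b β l u) := by
  have hmeas : AEStronglyMeasurable (fun u => Real.exp (gibbsPotential b β l u)) := by
    unfold gibbsPotential; fun_prop
  rw [← integrableOn_univ, ← Set.Iic_union_Ioi (a := 0)]
  refine IntegrableOn.union ?_ ?_
  · refine ((integrableOn_exp_mul_Iic hb 0).const_mul
      (Real.exp ((l / b + 1) ^ 2 / (2 * β)))).mono' hmeas.restrict ?_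
    filter_upwards [ae_restrict_mem measurableSet_Iic] with u hu
    rw [Real.norm_of_nonneg (Real.exp_pos _).le, ← Real.exp_add, Real.exp_le_exp]
    exact gibbsPotential_le_of_nonpos hb hβ hu
  · refine (exp_neg_integrableOn_Ioi 0 hl).mono' hmeas.restrict (ae_of_all _ fun u => ?_)
    rw [Real.norm_of_nonneg (Real.exp_pos _).le, Real.exp_le_exp, gibbsPotential]
    nlinarith [Real.exp_pos (-(b * u))]

lemma isProbabilityMeasure_gibbsMeasure {b β l : ℝ} (hb : 0 < b) (hβ : 0 < β) (hl : 0 < l) :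
    IsProbabilityMeasure (gibbsMeasure b β l) := by
  rw [gibbsMeasure_eq_tilted]
  exact isProbabilityMeasure_tilted (integrable_exp_gibbsPotential hb hβ hl)

lemma integrable_exp_mul_gibbsMeasure {b β l c : ℝ} (hb : 0 < b) (hβ : 0 < β) (hl : 0 < l)
    (hc : c < l) : Integrable (fun u => Real.exp (c * u)) (gibbsMeasure b β l) := by
  rw [gibbsMeasure_eq_tilted, integrable_tilted_iff (integrable_exp_gibbsPotential hb hβ hl)]
  convert integrable_exp_gibbsPotential hb hβ (sub_pos.2 hc) using 2 with u
  rw [smul_eq_mul, ← Real.exp_add, gibbsPotential, gibbsPotential]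
  ring_nf

lemma integrable_id_gibbsMeasure {b β l : ℝ} (hb : 0 < b) (hβ : 0 < β) (hl : 0 < l) :
    Integrable (fun u : ℝ => u) (gibbsMeasure b β l) := by
  simpa using integrable_pow_of_integrable_exp_mul (X := id) (half_pos hl).ne'
    (integrable_exp_mul_gibbsMeasure hb hβ hl (half_lt_self hl))
    (integrable_exp_mul_gibbsMeasure hb hβ hl (by linarith)) 1

lemma integrable_Vb {b : ℝ} {ν : Measure ℝ} [IsFiniteMeasure ν]
    (hexp : Integrable (fun u => Real.exp (-(b * u))) ν) (hid : Integrable (fun u : ℝ => u) ν) :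
    Integrable (Vb b) ν :=
  (hexp.sub (integrable_const 1)).add (hid.const_mul b)

lemma integral_Vb {b : ℝ} {ν : Measure ℝ} [IsProbabilityMeasure ν]
    (hexp : Integrable (fun u => Real.exp (-(b * u))) ν) (hid : Integrable (fun u : ℝ => u) ν) :
    ∫ u, Vb b u ∂ν = (∫ u, Real.exp (-(b * u)) ∂ν) - 1 + b * ∫ u, u ∂ν := by
  simp only [Vb]
  rw [integral_add (by exact hexp.sub (integrable_const 1)) (hid.const_mul b),
    integral_sub hexp (integrable_const 1), integral_const_mul, integral_const, probReal_univ,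
    one_smul]

section Pi

variable {ι : Type*} [Fintype ι] {X : ι → Type*} [∀ i, MeasurableSpace (X i)]
  {μ : ∀ i, Measure (X i)} [∀ i, IsProbabilityMeasure (μ i)] {i j : ι}

lemma indepFun_eval_pi (hij : i ≠ j) :
    (fun x : ∀ k, X k => x i) ⟂ᵢ[Measure.pi μ] fun x => x j :=
  (iIndepFun_pi (μ := μ) (X := fun _ y => y) fun _ => aemeasurable_id).indepFun hij

lemma integrable_comp_eval_mul_comp_eval (hij : i ≠ j) {f : X i → ℝ} {g : X j → ℝ}
    (hf : Integrable f (μ i)) (hg : Integrable g (μ j)) :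
    Integrable (fun x : ∀ k, X k => f (x i) * g (x j)) (Measure.pi μ) := by
  have hind : (fun x : ∀ k, X k => f (x i)) ⟂ᵢ[Measure.pi μ] fun x => g (x j) := by
    refine (indepFun_eval_pi hij).comp₀ (measurable_pi_apply i).aemeasurable
      (measurable_pi_apply j).aemeasurable ?_ ?_
    · exact (measurePreserving_eval μ i).map_eq ▸ hf.aemeasurable
    · exact (measurePreserving_eval μ j).map_eq ▸ hg.aemeasurable
  exact hind.integrable_mul (integrable_comp_eval hf) (integrable_comp_eval hg)

lemma integral_comp_eval_mul_comp_eval (hij : i ≠ j) {f : X i → ℝ} {g : X j → ℝ}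
    (hf : AEStronglyMeasurable f (μ i)) (hg : AEStronglyMeasurable g (μ j)) :
    ∫ x : ∀ k, X k, f (x i) * g (x j) ∂Measure.pi μ = (∫ u, f u ∂μ i) * ∫ u, g u ∂μ j := by
  rw [(indepFun_eval_pi hij).integral_fun_comp_mul_comp (measurable_pi_apply i).aemeasurable
      (measurable_pi_apply j).aemeasurable ((measurePreserving_eval μ i).map_eq ▸ hf)
      ((measurePreserving_eval μ j).map_eq ▸ hg),
    integral_comp_eval hf, integral_comp_eval hg]

end Pi

lemma je_eq (n : ℕ) (b αn γ : ℝ) (η : ZMod n → ℝ) (x : ZMod n) :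
    je n b αn γ η x =
      -αn * b ^ 2 * (Real.exp (-(b * η x)) * Real.exp (-(b * η (x + 1))))
        + αn * b ^ 2 * (Real.exp (-(b * η x)) + Real.exp (-(b * η (x + 1))))
        - γ * (Vb b (η (x + 1)) - Vb b (η x)) := by
  rw [je, mul_add, neg_add, Real.exp_add]

section Current

variable {n : ℕ} [NeZero n] {b : ℝ} {ν : Measure ℝ} [IsProbabilityMeasure ν] {x : ZMod n}

lemma integrable_je_pi (αn γ : ℝ) (hx : x ≠ x + 1)
    (hexp : Integrable (fun u => Real.exp (-(b * u))) ν) (hV : Integrable (Vb b) ν) :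
    Integrable (fun η => je n b αn γ η x) (Measure.pi fun _ => ν) := by
  have hA := integrable_comp_eval (μ := fun _ : ZMod n => ν) (i := x) hexp
  have hB := integrable_comp_eval (μ := fun _ : ZMod n => ν) (i := x + 1) hexp
  have hAB := integrable_comp_eval_mul_comp_eval (μ := fun _ : ZMod n => ν) hx hexp hexp
  have hP := integrable_comp_eval (μ := fun _ : ZMod n => ν) (i := x) hV
  have hQ := integrable_comp_eval (μ := fun _ : ZMod n => ν) (i := x + 1) hV
  simp only [je_eq]
  exact ((hAB.const_mul _).add ((hA.add hB).const_mul _)).sub ((hQ.sub hP).const_mul _)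

lemma integral_je_pi (αn γ : ℝ) (hx : x ≠ x + 1)
    (hexp : Integrable (fun u => Real.exp (-(b * u))) ν) (hV : Integrable (Vb b) ν) :
    ∫ η, je n b αn γ η x ∂(Measure.pi fun _ => ν)
      = -αn * b ^ 2 * (∫ u, Real.exp (-(b * u)) ∂ν) ^ 2
        + 2 * αn * b ^ 2 * ∫ u, Real.exp (-(b * u)) ∂ν := by
  have hA := integrable_comp_eval (μ := fun _ : ZMod n => ν) (i := x) hexp
  have hB := integrable_comp_eval (μ := fun _ : ZMod n => ν) (i := x + 1) hexp
  have hAB := integrable_comp_eval_mul_comp_eval (μ := fun _ : ZMod n => ν) hx hexp hexp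
  have hP := integrable_comp_eval (μ := fun _ : ZMod n => ν) (i := x) hV
  have hQ := integrable_comp_eval (μ := fun _ : ZMod n => ν) (i := x + 1) hV
  simp only [je_eq]
  rw [integral_sub (by exact (hAB.const_mul _).add ((hA.add hB).const_mul _))
      (by exact (hQ.sub hP).const_mul _),
    integral_add (hAB.const_mul _) (by exact (hA.add hB).const_mul _), integral_const_mul,
    integral_const_mul, integral_const_mul, integral_add hA hB, integral_sub hQ hP,
    integral_comp_eval_mul_comp_eval (μ := fun _ => ν) hx hexp.1 hexp.1,
    integral_comp_eval (μ := fun _ => ν) (i := x) hexp.1,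
    integral_comp_eval (μ := fun _ => ν) (i := x + 1) hexp.1,
    integral_comp_eval (μ := fun _ => ν) (i := x) hV.1,
    integral_comp_eval (μ := fun _ => ν) (i := x + 1) hV.1]
  ring

end Current

theorem mean_energy_current_general
    (n : ℕ) [NeZero n] (hn : 3 ≤ n) (b βv lv : ℝ) (hb : 0 < b) (hβ : 0 < βv) (hl : 0 < lv)
    (αn γ : ℝ) (x : ZMod n) :
    Integrable (fun η => je n b αn γ η x) (muEq n b βv lv) ∧
    Integrable (fun η : ZMod n → ℝ => Vb b (η x)) (muEq n b βv lv) ∧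
    Integrable (fun η : ZMod n → ℝ => η x) (muEq n b βv lv) ∧
    ∫ η, je n b αn γ η x ∂(muEq n b βv lv)
      = -αn * b ^ 2 *
          ((∫ η, Vb b (η x) ∂(muEq n b βv lv)) - b * ∫ η, η x ∂(muEq n b βv lv)) ^ 2
        + αn * b ^ 2 := by
  have := isProbabilityMeasure_gibbsMeasure hb hβ hl
  have hexp : Integrable (fun u => Real.exp (-(b * u))) (gibbsMeasure b βv lv) := by
    simpa using integrable_exp_mul_gibbsMeasure hb hβ hl (c := -b) (by linarith)
  have hid := integrable_id_gibbsMeasure hb hβ hl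
  have hV := integrable_Vb hexp hid
  have hx : x ≠ x + 1 := by
    have : Fact (1 < n) := ⟨by omega⟩
    simp
  rw [muEq]
  refine ⟨integrable_je_pi αn γ hx hexp hV, integrable_comp_eval (μ := fun _ => _) hV,
    integrable_comp_eval (f := fun u => u) hid, ?_⟩
  rw [integral_je_pi αn γ hx hexp hV, integral_comp_eval (μ := fun _ => _) hV.1,
    integral_eval (μ := fun _ => gibbsMeasure b βv lv), integral_Vb hexp hid]
  ring

/-- under the equilibrium product measure, the mean energy current is
`∫ j̄ᵉ_{x,x+1} dμ = −α_n b² (e − b v)² + α_n b²`, where `e = ∫ V_b(η_x) dμ` and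
`v = ∫ η_x dμ`; all the integrals appearing are finite. -/
theorem mean_energy_current
    (n : ℕ) [NeZero n] (hn : 3 ≤ n) (b βv lv : ℝ) (hb : 0 < b) (hβ : 0 < βv) (hl : 0 < lv)
    (αn γ : ℝ) (hγ : 0 < γ) (x : ZMod n) :
    Integrable (fun η => je n b αn γ η x) (muEq n b βv lv) ∧
    Integrable (fun η : ZMod n → ℝ => Vb b (η x)) (muEq n b βv lv) ∧
    Integrable (fun η : ZMod n → ℝ => η x) (muEq n b βv lv) ∧
    ∫ η, je n b αn γ η x ∂(muEq n b βv lv)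
      = -αn * b ^ 2 *
          ((∫ η, Vb b (η x) ∂(muEq n b βv lv)) - b * ∫ η, η x ∂(muEq n b βv lv)) ^ 2
        + αn * b ^ 2 :=
  mean_energy_current_general n hn b βv lv hb hβ hl αn γ x

end
end

section
/- L² bound on the time-integrated quadratic fluctuation term for a stationary process with product marginals: fix an integer n ≥ 3, reals T > 0, ρ ∈ ℝ, τ ≥ 0, let (Ω, 𝓕, P) be a probability space and X : [0,T] × Ω → ℝ^{ℤ/nℤ} a jointly measurable process such that for every s ∈ [0,T] the law of X_s is a product measure whose coordinates are i.i.d. with mean ρ and variance τ². Let g : [0,T] × ℤ/nℤ → ℝ be measurable with ∫_0^T Σ_x g(s,x)² ds < ∞. Then for every t ∈ [0,T], E_P[ ( ∫_0^t Σ_{x ∈ ℤ/nℤ} g(s,x) (X_s(x) − ρ)(X_s(x+1) − ρ) ds )² ] ≤ t τ⁴ ∫_0^t Σ_{x ∈ ℤ/nℤ} g(s,x)² ds, where the index x+1 is taken cyclically. -/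
/-! With `F s = Σ_x g(s,x) (X_s(x) - ρ)(X_s(x+1) - ρ)`, Cauchy–Schwarz in time gives
`(∫_0^t F s ds)² ≤ t ∫_0^t (F s)² ds`, so by Tonelli it suffices that
`E[(F s)²] = τ⁴ Σ_x g(s,x)²` for every `s`, a statement about the law of `X_s` alone.
Expanding the square, each `E[Y_x Y_{x+1} Y_z Y_{z+1}]` (with `Y = X_s - ρ`) factorises
over the coordinates into `∏_i E[Y^{m_i}]`, where `m_i` is the multiplicity of `i` in
`{x, x+1, z, z+1}`. For `x ≠ z` some coordinate occurs exactly once (as `n ≥ 3` gives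
`x + 2 ≠ x`), so the product vanishes; for `x = z` it equals `τ⁴`. -/

open MeasureTheory Finset
open scoped ENNReal

lemma Multiset.prod_map_eq_prod_pow_count {ι M : Type*} [Fintype ι] [DecidableEq ι]
    [CommMonoid M] (w : Multiset ι) (f : ι → M) :
    (w.map f).prod = ∏ i, f i ^ w.count i := by
  rw [Finset.prod_multiset_map_count]
  exact prod_subset (subset_univ _) fun i _ hi => by
    rw [Multiset.count_eq_zero.2 (by simpa using hi), pow_zero]

section ProductMoments

variable {ι : Type*} [Fintype ι] [DecidableEq ι] {ν : Measure ℝ} [IsProbabilityMeasure ν]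
  {ρ τ : ℝ}

lemma integrable_sub_pow_of_le_two (hL2 : MemLp (fun u : ℝ => u) 2 ν) {k : ℕ} (hk : k ≤ 2) :
    Integrable (fun u => (u - ρ) ^ k) ν := by
  interval_cases k
  · simp
  · simpa [Pi.sub_def] using (hL2.integrable one_le_two).sub (integrable_const ρ)
  · exact (hL2.sub (memLp_const ρ)).integrable_sq

lemma integral_pi_multiset_prod_sub (w : Multiset ι) :
    ∫ y, (w.map fun i => y i - ρ).prod ∂Measure.pi (fun _ : ι => ν)
      = ∏ i, ∫ u, (u - ρ) ^ w.count i ∂ν := by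
  simp_rw [Multiset.prod_map_eq_prod_pow_count]
  exact integral_fintype_prod_eq_prod fun i u => (u - ρ) ^ w.count i

lemma integrable_pi_multiset_prod_sub (hL2 : MemLp (fun u : ℝ => u) 2 ν) {w : Multiset ι}
    (hw : ∀ i, w.count i ≤ 2) :
    Integrable (fun y => (w.map fun i => y i - ρ).prod) (Measure.pi fun _ : ι => ν) := by
  simp_rw [Multiset.prod_map_eq_prod_pow_count]
  exact Integrable.fintype_prod fun i => integrable_sub_pow_of_le_two hL2 (hw i)

lemma integral_pi_multiset_prod_sub_of_count_eq_one (hL1 : Integrable (fun u : ℝ => u) ν)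
    (hmean : ∫ u, u ∂ν = ρ) {w : Multiset ι} {i : ι} (hi : w.count i = 1) :
    ∫ y, (w.map fun i => y i - ρ).prod ∂Measure.pi (fun _ : ι => ν) = 0 := by
  rw [integral_pi_multiset_prod_sub]
  refine prod_eq_zero (mem_univ i) ?_
  simp_rw [hi, pow_one]
  rw [integral_sub hL1 (integrable_const ρ), hmean]
  simp

lemma integral_pi_multiset_prod_sub_of_count_eq_zero_or_two
    (hvar : ∫ u, (u - ρ) ^ 2 ∂ν = τ ^ 2) {w : Multiset ι}
    (hw : ∀ i, w.count i = 0 ∨ w.count i = 2) :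
    ∫ y, (w.map fun i => y i - ρ).prod ∂Measure.pi (fun _ : ι => ν)
      = τ ^ Multiset.card w := by
  rw [integral_pi_multiset_prod_sub, ← Multiset.sum_count_eq_card fun i _ => mem_univ i,
    ← prod_pow_eq_pow_sum]
  refine prod_congr rfl fun i _ => ?_
  rcases hw i with h | h <;> simp [h, hvar]

end ProductMoments

section IntegratedSquare

variable {α : Type*} [MeasurableSpace α] {μ : Measure α}

lemma sq_lintegral_le_measure_univ_mul {h : α → ℝ≥0∞} (hh : AEMeasurable h μ) :
    (∫⁻ a, h a ∂μ) ^ 2 ≤ μ Set.univ * ∫⁻ a, h a ^ 2 ∂μ := by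
  have hCS := ENNReal.lintegral_mul_le_Lp_mul_Lq μ Real.HolderConjugate.two_two
    aemeasurable_const hh (f := 1)
  simp only [Pi.mul_apply, Pi.one_apply, one_mul, ENNReal.one_rpow, lintegral_const,
    ← ENNReal.mul_rpow_of_nonneg _ _ (by norm_num : (0 : ℝ) ≤ 1 / 2)] at hCS
  calc (∫⁻ a, h a ∂μ) ^ 2
      ≤ ((μ Set.univ * ∫⁻ a, h a ^ (2 : ℝ) ∂μ) ^ (1 / 2 : ℝ)) ^ 2 :=
        pow_le_pow_left' hCS 2
    _ = μ Set.univ * ∫⁻ a, h a ^ 2 ∂μ := by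
        rw [← ENNReal.rpow_natCast, ← ENNReal.rpow_mul]
        norm_num

lemma ofReal_sq_integral_le {f : α → ℝ} (hf : AEMeasurable f μ) :
    ENNReal.ofReal ((∫ a, f a ∂μ) ^ 2)
      ≤ μ Set.univ * ∫⁻ a, ENNReal.ofReal (f a ^ 2) ∂μ := by
  have hsq : ∀ x : ℝ, ENNReal.ofReal (x ^ 2) = ‖x‖ₑ ^ 2 := fun x => by
    rw [← sq_abs, ENNReal.ofReal_pow (abs_nonneg x), Real.enorm_eq_ofReal_abs]
  simp only [hsq]
  exact (pow_le_pow_left' (enorm_integral_le_lintegral_enorm f) 2).trans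
    (sq_lintegral_le_measure_univ_mul hf.enorm)

variable {Ω : Type*} [MeasurableSpace Ω] {P : Measure Ω} [SFinite P] {F : α → Ω → ℝ}

lemma lintegral_ofReal_sq_integral_le [SFinite μ] (hF : Measurable (Function.uncurry F)) :
    ∫⁻ ω, ENNReal.ofReal ((∫ s, F s ω ∂μ) ^ 2) ∂P
      ≤ μ Set.univ * ∫⁻ s, ∫⁻ ω, ENNReal.ofReal (F s ω ^ 2) ∂P ∂μ := by
  have hF2 : Measurable fun p : Ω × α => ENNReal.ofReal (F p.2 p.1 ^ 2) := by fun_prop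
  calc ∫⁻ ω, ENNReal.ofReal ((∫ s, F s ω ∂μ) ^ 2) ∂P
      ≤ ∫⁻ ω, μ Set.univ * ∫⁻ s, ENNReal.ofReal (F s ω ^ 2) ∂μ ∂P :=
        lintegral_mono fun ω =>
          ofReal_sq_integral_le (hF.comp measurable_prodMk_right).aemeasurable
    _ = μ Set.univ * ∫⁻ s, ∫⁻ ω, ENNReal.ofReal (F s ω ^ 2) ∂P ∂μ := by
        rw [lintegral_const_mul _ hF2.lintegral_prod_right',
          lintegral_lintegral_swap hF2.aemeasurable]

lemma integral_sq_integral_le [IsFiniteMeasure μ] (hF : Measurable (Function.uncurry F))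
    {C : α → ℝ} (hC0 : 0 ≤ᵐ[μ] C) (hC : Integrable C μ)
    (hFC : ∀ᵐ s ∂μ, ∫⁻ ω, ENNReal.ofReal (F s ω ^ 2) ∂P ≤ ENNReal.ofReal (C s)) :
    ∫ ω, (∫ s, F s ω ∂μ) ^ 2 ∂P ≤ μ.real Set.univ * ∫ s, C s ∂μ := by
  have hI : Measurable fun ω => ∫ s, F s ω ∂μ :=
    (hF.comp measurable_swap).stronglyMeasurable.integral_prod_right'.measurable
  rw [integral_eq_lintegral_of_nonneg_ae (ae_of_all _ fun ω => sq_nonneg _)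
      (hI.pow_const 2).aestronglyMeasurable, integral_eq_lintegral_of_nonneg_ae hC0 hC.1,
    measureReal_def, ← ENNReal.toReal_mul]
  gcongr
  · exact ENNReal.mul_ne_top (measure_ne_top μ _) hC.lintegral_lt_top.ne
  · refine (lintegral_ofReal_sq_integral_le hF).trans ?_
    gcongr μ Set.univ * ?_
    exact lintegral_mono_ae hFC

end IntegratedSquare

section EdgePairs

variable {ι : Type*} [DecidableEq ι] {σ : ι → ι}

lemma count_edge_pair_le_two (hσ : ∀ i, σ i ≠ i) (x z i : ι) :
    ({x, σ x, z, σ z} : Multiset ι).count i ≤ 2 := by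
  simp only [Multiset.insert_eq_cons, Multiset.count_cons, Multiset.count_singleton]
  grind

lemma count_edge_pair_self (hσ : ∀ i, σ i ≠ i) (x i : ι) :
    ({x, σ x, x, σ x} : Multiset ι).count i = 0 ∨
      ({x, σ x, x, σ x} : Multiset ι).count i = 2 := by
  simp only [Multiset.insert_eq_cons, Multiset.count_cons, Multiset.count_singleton]
  grind

lemma exists_count_edge_pair_eq_one (hσ : ∀ i, σ i ≠ i) (hσσ : ∀ i, σ (σ i) ≠ i)
    {x z : ι} (hxz : x ≠ z) : ∃ i, ({x, σ x, z, σ z} : Multiset ι).count i = 1 := by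
  simp only [Multiset.insert_eq_cons, Multiset.count_cons, Multiset.count_singleton]
  by_cases hx : x = σ z
  · exact ⟨z, by grind⟩
  · exact ⟨x, by grind⟩

end EdgePairs

lemma edge_mul_edge_eq_multiset_prod {ι : Type*} {σ : ι → ι} {ρ : ℝ} (y : ι → ℝ)
    (x z : ι) :
    (y x - ρ) * (y (σ x) - ρ) * ((y z - ρ) * (y (σ z) - ρ))
      = (({x, σ x, z, σ z} : Multiset ι).map fun i => y i - ρ).prod := by
  simp [mul_assoc]

lemma sq_sum_edge {ι : Type*} [Fintype ι] {σ : ι → ι} {ρ : ℝ} (c y : ι → ℝ) :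
    (∑ x, c x * ((y x - ρ) * (y (σ x) - ρ))) ^ 2
      = ∑ x, ∑ z, c x * c z *
          ((y x - ρ) * (y (σ x) - ρ) * ((y z - ρ) * (y (σ z) - ρ))) := by
  rw [sq, sum_mul_sum]
  exact sum_congr rfl fun x _ => sum_congr rfl fun z _ => by ring

section NearestNeighbourForm

variable {ι : Type*} [Fintype ι] [DecidableEq ι] {σ : ι → ι} {ν : Measure ℝ}
  [IsProbabilityMeasure ν] {ρ τ : ℝ}

lemma integrable_pi_edge_mul_edge (hL2 : MemLp (fun u : ℝ => u) 2 ν) (hσ : ∀ i, σ i ≠ i)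
    (x z : ι) :
    Integrable (fun y => (y x - ρ) * (y (σ x) - ρ) * ((y z - ρ) * (y (σ z) - ρ)))
      (Measure.pi fun _ : ι => ν) := by
  simp_rw [edge_mul_edge_eq_multiset_prod]
  exact integrable_pi_multiset_prod_sub hL2 (count_edge_pair_le_two hσ x z)

lemma integral_pi_edge_mul_edge (hL2 : MemLp (fun u : ℝ => u) 2 ν) (hmean : ∫ u, u ∂ν = ρ)
    (hvar : ∫ u, (u - ρ) ^ 2 ∂ν = τ ^ 2) (hσ : ∀ i, σ i ≠ i)
    (hσσ : ∀ i, σ (σ i) ≠ i) (x z : ι) :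
    ∫ y, (y x - ρ) * (y (σ x) - ρ) * ((y z - ρ) * (y (σ z) - ρ))
        ∂Measure.pi (fun _ : ι => ν) = if x = z then τ ^ 4 else 0 := by
  simp_rw [edge_mul_edge_eq_multiset_prod]
  split_ifs with hxz
  · subst hxz
    exact integral_pi_multiset_prod_sub_of_count_eq_zero_or_two hvar (count_edge_pair_self hσ x)
  · obtain ⟨i, hi⟩ := exists_count_edge_pair_eq_one hσ hσσ hxz
    exact integral_pi_multiset_prod_sub_of_count_eq_one (hL2.integrable one_le_two) hmean hi

lemma integrable_pi_sq_sum_edge (hL2 : MemLp (fun u : ℝ => u) 2 ν) (hσ : ∀ i, σ i ≠ i)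
    (c : ι → ℝ) :
    Integrable (fun y => (∑ x, c x * ((y x - ρ) * (y (σ x) - ρ))) ^ 2)
      (Measure.pi fun _ : ι => ν) := by
  simp_rw [sq_sum_edge]
  exact integrable_finsetSum _ fun x _ => integrable_finsetSum _ fun z _ =>
    (integrable_pi_edge_mul_edge hL2 hσ x z).const_mul _

lemma integral_pi_sq_sum_edge (hL2 : MemLp (fun u : ℝ => u) 2 ν) (hmean : ∫ u, u ∂ν = ρ)
    (hvar : ∫ u, (u - ρ) ^ 2 ∂ν = τ ^ 2) (hσ : ∀ i, σ i ≠ i)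
    (hσσ : ∀ i, σ (σ i) ≠ i) (c : ι → ℝ) :
    ∫ y, (∑ x, c x * ((y x - ρ) * (y (σ x) - ρ))) ^ 2 ∂Measure.pi (fun _ : ι => ν)
      = τ ^ 4 * ∑ x, c x ^ 2 := by
  simp_rw [sq_sum_edge]
  rw [integral_finsetSum _ fun x _ => integrable_finsetSum _ fun z _ =>
    (integrable_pi_edge_mul_edge hL2 hσ x z).const_mul _, mul_sum]
  refine sum_congr rfl fun x _ => ?_
  rw [integral_finsetSum _ fun z _ => (integrable_pi_edge_mul_edge hL2 hσ x z).const_mul _]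
  simp_rw [integral_const_mul, integral_pi_edge_mul_edge hL2 hmean hvar hσ hσσ, mul_ite,
    mul_zero, sum_ite_eq, mem_univ, if_true]
  ring

lemma lintegral_ofReal_sq_sum_edge_of_map_eq {Ω : Type*} [MeasurableSpace Ω] {P : Measure Ω}
    {Y : Ω → ι → ℝ} (hY : AEMeasurable Y P) (hlaw : P.map Y = Measure.pi fun _ : ι => ν)
    (hL2 : MemLp (fun u : ℝ => u) 2 ν) (hmean : ∫ u, u ∂ν = ρ)
    (hvar : ∫ u, (u - ρ) ^ 2 ∂ν = τ ^ 2) (hσ : ∀ i, σ i ≠ i)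
    (hσσ : ∀ i, σ (σ i) ≠ i) (c : ι → ℝ) :
    ∫⁻ ω, ENNReal.ofReal ((∑ x, c x * ((Y ω x - ρ) * (Y ω (σ x) - ρ))) ^ 2) ∂P
      = ENNReal.ofReal (τ ^ 4 * ∑ x, c x ^ 2) := by
  rw [← lintegral_map' (by fun_prop) hY (f := fun y =>
      ENNReal.ofReal ((∑ x, c x * ((y x - ρ) * (y (σ x) - ρ))) ^ 2)), hlaw,
    ← ofReal_integral_eq_lintegral_ofReal (integrable_pi_sq_sum_edge hL2 hσ c)
      (ae_of_all _ fun _ => sq_nonneg _),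
    integral_pi_sq_sum_edge hL2 hmean hvar hσ hσσ]

end NearestNeighbourForm

lemma ZMod.add_natCast_ne_self {n k : ℕ} (hk : 0 < k) (hkn : k < n) (x : ZMod n) :
    x + k ≠ x := by
  rw [Ne, add_eq_left, ZMod.natCast_eq_zero_iff]
  exact Nat.not_dvd_of_pos_of_lt hk hkn

theorem time_integrated_quadratic_bound_general
    {Ω : Type*} [MeasurableSpace Ω] (P : Measure Ω) [IsProbabilityMeasure P]
    (n : ℕ) [NeZero n] (hn : 3 ≤ n)
    (T ρ τ : ℝ)
    (X : ℝ → Ω → ZMod n → ℝ) (hX : Measurable fun p : ℝ × Ω => X p.1 p.2)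
    (ν : Measure ℝ) [IsProbabilityMeasure ν]
    (hL2 : MemLp (fun u : ℝ => u) 2 ν)
    (hmean : ∫ u : ℝ, u ∂ν = ρ)
    (hvar : ∫ u : ℝ, (u - ρ) ^ 2 ∂ν = τ ^ 2)
    (hlaw : ∀ s ∈ Set.Icc (0 : ℝ) T,
      Measure.map (X s) P = Measure.pi fun _ : ZMod n => ν)
    (g : ℝ → ZMod n → ℝ) (hg : ∀ x, Measurable fun s => g s x)
    (hgInt : ∫⁻ s in Set.Icc (0 : ℝ) T,
        ENNReal.ofReal (∑ x : ZMod n, (g s x) ^ 2) < ⊤) :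
    ∀ t ∈ Set.Icc (0 : ℝ) T,
      ∫ ω, (∫ s in Set.Icc (0 : ℝ) t,
            ∑ x : ZMod n, g s x * ((X s ω x - ρ) * (X s ω (x + 1) - ρ))) ^ 2 ∂P
        ≤ t * τ ^ 4 * ∫ s in Set.Icc (0 : ℝ) t, ∑ x : ZMod n, (g s x) ^ 2 := by
  intro t ⟨ht0, htT⟩
  have hIcc : Set.Icc 0 t ⊆ Set.Icc 0 T := Set.Icc_subset_Icc_right htT
  have hσ : ∀ x : ZMod n, x + 1 ≠ x := by
    simpa using ZMod.add_natCast_ne_self (n := n) (k := 1) one_pos (by omega)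
  have hσσ : ∀ x : ZMod n, x + 1 + 1 ≠ x := by
    simpa [add_assoc, one_add_one_eq_two] using
      ZMod.add_natCast_ne_self (n := n) (k := 2) two_pos (by omega)
  have hG : IntegrableOn (fun s => ∑ x, g s x ^ 2) (Set.Icc 0 T) :=
    ⟨by fun_prop, (hasFiniteIntegral_iff_ofReal (ae_of_all _ fun s => by positivity)).2 hgInt⟩
  have key := integral_sq_integral_le (μ := volume.restrict (Set.Icc 0 t)) (P := P)
    (F := fun s ω => ∑ x : ZMod n, g s x * ((X s ω x - ρ) * (X s ω (x + 1) - ρ)))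
    (C := fun s => τ ^ 4 * ∑ x, g s x ^ 2) (by fun_prop) (ae_of_all _ fun s => by positivity)
    ((hG.mono_set hIcc).const_mul _) <| ae_restrict_of_forall_mem measurableSet_Icc fun s hs =>
      (lintegral_ofReal_sq_sum_edge_of_map_eq (hX.comp measurable_prodMk_left).aemeasurable
        (hlaw s (hIcc hs)) hL2 hmean hvar hσ hσσ (g s)).le
  rwa [measureReal_restrict_apply_univ, Real.volume_real_Icc_of_le ht0, sub_zero,
    integral_const_mul, ← mul_assoc] at key

/-- `L²` bound on the time-integrated quadratic fluctuation term for a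
stationary process with product marginals. If for each `s ∈ [0,T]` the law of `X_s`
is the `n`-fold product of a fixed probability measure `ν` on `ℝ` with mean `ρ` and
variance `τ²`, and `g` is measurable with `∫_0^T Σ_x g(s,x)² ds < ∞`, then for every
`t ∈ [0,T]`,
`E[(∫_0^t Σ_x g(s,x) X̄_s(x) X̄_s(x+1) ds)²] ≤ t τ⁴ ∫_0^t Σ_x g(s,x)² ds`. -/
theorem time_integrated_quadratic_bound
    {Ω : Type*} [MeasurableSpace Ω] (P : Measure Ω) [IsProbabilityMeasure P]
    (n : ℕ) [NeZero n] (hn : 3 ≤ n)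
    (T ρ τ : ℝ) (hT : 0 < T) (hτ : 0 ≤ τ)
    (X : ℝ → Ω → ZMod n → ℝ) (hX : Measurable fun p : ℝ × Ω => X p.1 p.2)
    (ν : Measure ℝ) [IsProbabilityMeasure ν]
    (hL2 : MemLp (fun u : ℝ => u) 2 ν)
    (hmean : ∫ u : ℝ, u ∂ν = ρ)
    (hvar : ∫ u : ℝ, (u - ρ) ^ 2 ∂ν = τ ^ 2)
    (hlaw : ∀ s ∈ Set.Icc (0 : ℝ) T,
      Measure.map (X s) P = Measure.pi fun _ : ZMod n => ν)
    (g : ℝ → ZMod n → ℝ) (hg : ∀ x, Measurable fun s => g s x)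
    (hgInt : ∫⁻ s in Set.Icc (0 : ℝ) T,
        ENNReal.ofReal (∑ x : ZMod n, (g s x) ^ 2) < ⊤) :
    ∀ t ∈ Set.Icc (0 : ℝ) T,
      ∫ ω, (∫ s in Set.Icc (0 : ℝ) t,
            ∑ x : ZMod n, g s x * ((X s ω x - ρ) * (X s ω (x + 1) - ρ))) ^ 2 ∂P
        ≤ t * τ ^ 4 * ∫ s in Set.Icc (0 : ℝ) t, ∑ x : ZMod n, (g s x) ^ 2 :=
  time_integrated_quadratic_bound_general P n hn T ρ τ X hX ν hL2 hmean hvar hlaw g hg hgInt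
end
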